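/- arXiv:1805.00349 — 2 statements merged into one kernel-verified Lean document; each statement's English description precedes it below -/
import Mathlib

section
/- If S is an LPL subset of V, then its closure cl(S), its interior Int(S), and its complement V \ S are LPL. -/
/-!
The closure of a nonempty convex polyhedron is obtained by relaxing its strict inequalities:
a point satisfying the relaxed inequalities is the endpoint of an open segment lying in the
polyhedron. Since closure commutes with locally finite unions, closures of LPL sets are LPL.

For the complement, tile `V` by the integer unit cubes of a basis, a locally finite family of
compact polyhedra. A cube meets only finitely many of the polyhedra making up `S`, so on the cube
`Sᶜ` is the cube intersected with finitely many complements of polyhedra; each such complement is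
a finite union of half-spaces, so the piece is a finite union of polyhedra. Finally
`interior S = (closure Sᶜ)ᶜ`.
-/

open Set

/-- An (open or closed) affine half-space in a real vector space. -/
def IsHalfspace {V : Type*} [AddCommGroup V] [Module ℝ V] (H : Set V) : Prop :=
  ∃ (f : V →ₗ[ℝ] ℝ) (c : ℝ), H = {x | f x < c} ∨ H = {x | f x ≤ c}

/-- A convex polyhedron: the intersection of finitely many open or closed affine
half-spaces (the empty intersection being the whole space). -/
def IsConvexPolyhedron {V : Type*} [AddCommGroup V] [Module ℝ V] (P : Set V) : Prop :=
  ∃ (n : ℕ) (H : Fin n → Set V), (∀ i, IsHalfspace (H i)) ∧ P = ⋂ i, H i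

/-- A PL (piecewise linear) set: a finite union of convex polyhedra. -/
def IsPL {V : Type*} [AddCommGroup V] [Module ℝ V] (S : Set V) : Prop :=
  ∃ (n : ℕ) (P : Fin n → Set V), (∀ i, IsConvexPolyhedron (P i)) ∧ S = ⋃ i, P i

/-- An LPL (locally piecewise linear) set: the union of a locally finite family of
convex polyhedra. -/
def IsLPL {V : Type*} [AddCommGroup V] [Module ℝ V] [TopologicalSpace V] (S : Set V) : Prop :=
  ∃ Ps : Set (Set V), (∀ P ∈ Ps, IsConvexPolyhedron P) ∧
    LocallyFinite (fun P : Ps => (P : Set V)) ∧ S = ⋃₀ Ps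

namespace LocallyFinite

variable {X : Type*} [TopologicalSpace X]

theorem sigma {ι : Type*} {κ : ι → Type*} [∀ i, Finite (κ i)] {Q : ι → Set X}
    {P : ∀ i, κ i → Set X} (hQ : LocallyFinite Q) (hPQ : ∀ i j, P i j ⊆ Q i) :
    LocallyFinite fun p : Σ i, κ i => P p.1 p.2 := by
  intro x
  obtain ⟨U, hU, hfin⟩ := hQ x
  refine ⟨U, hU, (hfin.biUnion fun i _ => finite_range (Sigma.mk i)).subset ?_⟩
  rintro ⟨i, j⟩ hne
  exact mem_biUnion (hne.mono (inter_subset_inter_left U (hPQ i j))) (mem_range_self j)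

theorem pi {ι : Type*} [Finite ι] {κ : ι → Type*} {Y : ι → Type*}
    [∀ i, TopologicalSpace (Y i)] {f : ∀ i, κ i → Set (Y i)} (hf : ∀ i, LocallyFinite (f i)) :
    LocallyFinite fun z : (∀ i, κ i) => univ.pi fun i => f i (z i) := by
  intro x
  choose U hU hfin using fun i => hf i (x i)
  refine ⟨univ.pi U, set_pi_mem_nhds finite_univ fun i _ => hU i, ?_⟩
  exact (Finite.pi hfin).subset fun z ⟨y, hyf, hyU⟩ i _ => ⟨y i, hyf i trivial, hyU i trivial⟩

end LocallyFinite

theorem locallyFinite_Icc_intCast : LocallyFinite fun n : ℤ => Icc (n : ℝ) (n + 1) :=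
  locallyFinite_Icc_of_tendsto tendsto_intCast_atTop_atTop
    (Filter.tendsto_atBot_add_const_right _ _ (tendsto_intCast_atBot_iff.2 Filter.tendsto_id))

section Polyhedra

variable {V W : Type*} [AddCommGroup V] [Module ℝ V] [AddCommGroup W] [Module ℝ W]

theorem IsHalfspace.compl {H : Set V} (h : IsHalfspace H) : IsHalfspace Hᶜ := by
  obtain ⟨f, c, rfl | rfl⟩ := h
  · exact ⟨-f, -c, Or.inr (by ext x; simp)⟩
  · exact ⟨-f, -c, Or.inl (by ext x; simp [neg_lt])⟩

theorem IsHalfspace.preimage {H : Set W} (h : IsHalfspace H) (g : V →ₗ[ℝ] W) :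
    IsHalfspace (g ⁻¹' H) := by
  obtain ⟨f, c, rfl | rfl⟩ := h
  exacts [⟨f ∘ₗ g, c, Or.inl rfl⟩, ⟨f ∘ₗ g, c, Or.inr rfl⟩]

theorem IsHalfspace.isConvexPolyhedron {H : Set V} (h : IsHalfspace H) :
    IsConvexPolyhedron H :=
  ⟨1, fun _ => H, fun _ => h, (iInter_const H).symm⟩

theorem isConvexPolyhedron_iInter_of_isHalfspace {ι : Type*} [Finite ι] {H : ι → Set V}
    (h : ∀ i, IsHalfspace (H i)) : IsConvexPolyhedron (⋂ i, H i) := by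
  obtain ⟨n, ⟨e⟩⟩ := Finite.exists_equiv_fin ι
  exact ⟨n, H ∘ e.symm, fun i => h _, (e.symm.surjective.iInter_comp H).symm⟩

theorem isConvexPolyhedron_iInter {ι : Type*} [Finite ι] {P : ι → Set V}
    (h : ∀ i, IsConvexPolyhedron (P i)) : IsConvexPolyhedron (⋂ i, P i) := by
  choose n H hH hP using h
  simp_rw [hP, ← iInter_sigma fun p : Σ i, Fin (n i) => H p.1 p.2]
  exact isConvexPolyhedron_iInter_of_isHalfspace fun p => hH p.1 p.2

theorem IsConvexPolyhedron.preimage {P : Set W} (h : IsConvexPolyhedron P) (g : V →ₗ[ℝ] W) :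
    IsConvexPolyhedron (g ⁻¹' P) := by
  obtain ⟨n, H, hH, rfl⟩ := h
  exact ⟨n, fun i => g ⁻¹' H i, fun i => (hH i).preimage g, preimage_iInter⟩

theorem isConvexPolyhedron_pi_Icc {ι : Type*} [Finite ι] (a b : ι → ℝ) :
    IsConvexPolyhedron (univ.pi fun i => Icc (a i) (b i)) := by
  have hIcc : ∀ i, IsConvexPolyhedron ((fun x : ι → ℝ => x i) ⁻¹' Icc (a i) (b i)) := fun i => by
    rw [← Ici_inter_Iic, preimage_inter, inter_eq_iInter]
    refine isConvexPolyhedron_iInter_of_isHalfspace fun j => ?_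
    cases j
    · exact ⟨LinearMap.proj i, b i, Or.inr rfl⟩
    · exact ⟨-LinearMap.proj i, -a i, Or.inr (by ext x; simp)⟩
  simpa only [pi_def, mem_univ, iInter_true] using isConvexPolyhedron_iInter hIcc

theorem IsConvexPolyhedron.isPL {P : Set V} (h : IsConvexPolyhedron P) : IsPL P :=
  ⟨1, fun _ => P, fun _ => h, (iUnion_const P).symm⟩

theorem isPL_iUnion {ι : Type*} [Finite ι] {P : ι → Set V} (h : ∀ i, IsConvexPolyhedron (P i)) :
    IsPL (⋃ i, P i) := by
  obtain ⟨n, ⟨e⟩⟩ := Finite.exists_equiv_fin ι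
  exact ⟨n, P ∘ e.symm, fun i => h _, (e.symm.surjective.iUnion_comp P).symm⟩

theorem IsPL.iInter {ι : Type*} [Finite ι] {S : ι → Set V} (h : ∀ i, IsPL (S i)) :
    IsPL (⋂ i, S i) := by
  choose n P hP hS using h
  simp_rw [hS]
  rw [show (⋂ i, ⋃ j, P i j) = ⋃ g : ∀ i, Fin (n i), ⋂ i, P i (g i) from iInf_iSup_eq]
  exact isPL_iUnion fun g => isConvexPolyhedron_iInter fun i => hP i (g i)

theorem IsPL.inter {S T : Set V} (hS : IsPL S) (hT : IsPL T) : IsPL (S ∩ T) := by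
  rw [inter_eq_iInter]
  exact IsPL.iInter fun b => by cases b <;> assumption

theorem IsConvexPolyhedron.isPL_compl {P : Set V} (h : IsConvexPolyhedron P) : IsPL Pᶜ := by
  obtain ⟨n, H, hH, rfl⟩ := h
  rw [compl_iInter]
  exact isPL_iUnion fun i => (hH i).compl.isConvexPolyhedron

theorem openSegment_subset_of_mem_of_le {f : V →ₗ[ℝ] ℝ} {c : ℝ} {H : Set V}
    (hH : H = {x | f x < c} ∨ H = {x | f x ≤ c}) {p y : V} (hp : p ∈ H) (hy : f y ≤ c) :
    openSegment ℝ p y ⊆ H := by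
  rintro _ ⟨a, b, ha, hb, hab, rfl⟩
  have hc : c = a * c + b * c := by rw [← add_mul, hab, one_mul]
  rcases hH with rfl | rfl <;>
    simp only [mem_ofPred_eq, map_add, map_smul, smul_eq_mul] at hp ⊢ <;>
    nlinarith [mul_le_mul_of_nonneg_left hy hb.le]

end Polyhedra

section LPL

variable {V : Type*} [AddCommGroup V] [Module ℝ V] [TopologicalSpace V]

theorem isLPL_iUnion {ι : Type*} {P : ι → Set V} (hP : ∀ i, IsConvexPolyhedron (P i))
    (hlf : LocallyFinite P) : IsLPL (⋃ i, P i) :=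
  ⟨range P, forall_mem_range.2 hP, hlf.on_range, (sUnion_range P).symm⟩

theorem isLPL_iUnion_of_isPL {ι : Type*} {S : ι → Set V} (hS : ∀ i, IsPL (S i))
    (hlf : LocallyFinite S) : IsLPL (⋃ i, S i) := by
  choose n P hP hSP using hS
  have hPS : ∀ i j, P i j ⊆ S i := fun i j => (hSP i).symm ▸ subset_iUnion (P i) j
  simp_rw [hSP, iUnion_sigma' P]
  exact isLPL_iUnion (fun p => hP p.1 p.2) (hlf.sigma hPS)

end LPL

section Closure

variable {V : Type*} [NormedAddCommGroup V] [NormedSpace ℝ V] [FiniteDimensional ℝ V]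

theorem IsConvexPolyhedron.closure {P : Set V} (hP : IsConvexPolyhedron P) :
    IsConvexPolyhedron (closure P) := by
  rcases P.eq_empty_or_nonempty with rfl | ⟨p, hp⟩
  · rwa [closure_empty]
  obtain ⟨n, H, hH, rfl⟩ := hP
  choose f c hfc using hH
  have hHle : ∀ i, H i ⊆ {x | f i x ≤ c i} := fun i x hx => by
    rcases hfc i with h | h <;> rw [h] at hx
    exacts [(show f i x < c i from hx).le, hx]
  suffices _root_.closure (⋂ i, H i) = ⋂ i, {x | f i x ≤ c i} from
    this ▸ ⟨n, _, fun i => ⟨f i, c i, Or.inr rfl⟩, rfl⟩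
  refine (closure_minimal (iInter_mono hHle) (isClosed_iInter fun i =>
    isClosed_le (f i).continuous_of_finiteDimensional continuous_const)).antisymm fun y hy => ?_
  have hseg : openSegment ℝ p y ⊆ ⋂ i, H i := subset_iInter fun i =>
    openSegment_subset_of_mem_of_le (hfc i) (mem_iInter.1 hp i) (mem_iInter.1 hy i)
  exact closure_mono hseg (segment_subset_closure_openSegment (right_mem_segment ℝ p y))

theorem IsLPL.closure {S : Set V} (hS : IsLPL S) : IsLPL (closure S) := by
  obtain ⟨Ps, hP, hlf, rfl⟩ := hS
  rw [sUnion_eq_iUnion, hlf.closure_iUnion]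
  exact isLPL_iUnion (fun P => (hP P P.2).closure) hlf.closure

end Closure

section Complement

variable {V : Type*} [NormedAddCommGroup V] [NormedSpace ℝ V] [FiniteDimensional ℝ V]

theorem exists_locallyFinite_cover_isCompact_isConvexPolyhedron :
    ∃ (ι : Type) (K : ι → Set V), (∀ i, IsCompact (K i) ∧ IsConvexPolyhedron (K i)) ∧
      LocallyFinite K ∧ ⋃ i, K i = univ := by
  let e := (Module.finBasis ℝ V).equivFunL
  let box : (Fin (Module.finrank ℝ V) → ℤ) → Set (Fin (Module.finrank ℝ V) → ℝ) :=
    fun z => univ.pi fun i => Icc (z i : ℝ) (z i + 1)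
  refine ⟨_, fun z => e ⁻¹' box z, fun z => ⟨?_, ?_⟩, ?_, ?_⟩
  · exact e.toHomeomorph.isCompact_preimage.2 (isCompact_univ_pi fun i => isCompact_Icc)
  · exact (isConvexPolyhedron_pi_Icc _ _).preimage e.toLinearEquiv.toLinearMap
  · exact (LocallyFinite.pi fun _ => locallyFinite_Icc_intCast).preimage_continuous e.continuous
  · refine eq_univ_of_forall fun x => mem_iUnion.2 ⟨fun i => ⌊e x i⌋, fun i _ => ?_⟩
    exact ⟨Int.floor_le _, (Int.lt_floor_add_one _).le⟩

theorem isLPL_compl_iUnion {ι : Type*} {P : ι → Set V} (hP : ∀ i, IsConvexPolyhedron (P i))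
    (hlf : LocallyFinite P) : IsLPL (⋃ i, P i)ᶜ := by
  obtain ⟨κ, K, hK, hlfK, hcover⟩ :=
    exists_locallyFinite_cover_isCompact_isConvexPolyhedron (V := V)
  rw [← inter_univ (⋃ i, P i)ᶜ, ← hcover, inter_iUnion]
  refine isLPL_iUnion_of_isPL (fun k => ?_) (hlfK.subset fun k => inter_subset_right)
  have : Finite {i | (P i ∩ K k).Nonempty} :=
    (hlf.finite_nonempty_inter_compact (hK k).1).to_subtype
  have hpiece : (⋃ i, P i)ᶜ ∩ K k = K k ∩ ⋂ i : {i | (P i ∩ K k).Nonempty}, (P i)ᶜ := by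
    ext x
    simp only [mem_inter_iff, mem_compl_iff, mem_iUnion, mem_iInter, not_exists]
    exact ⟨fun ⟨hx, hxK⟩ => ⟨hxK, fun i => hx i⟩,
      fun ⟨hxK, hx⟩ => ⟨fun i hxi => hx ⟨i, x, hxi, hxK⟩ hxi, hxK⟩⟩
  rw [hpiece]
  exact (hK k).2.isPL.inter (IsPL.iInter fun i => (hP i).isPL_compl)

theorem IsLPL.compl {S : Set V} (hS : IsLPL S) : IsLPL Sᶜ := by
  obtain ⟨Ps, hP, hlf, rfl⟩ := hS
  rw [sUnion_eq_iUnion]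
  exact isLPL_compl_iUnion (fun P => hP P P.2) hlf

theorem IsLPL.interior {S : Set V} (hS : IsLPL S) : IsLPL (interior S) := by
  rw [← compl_compl (_root_.interior S), ← closure_compl]
  exact hS.compl.closure.compl

end Complement

theorem LPL_closure_interior_compl {V : Type*} [NormedAddCommGroup V] [NormedSpace ℝ V]
    [FiniteDimensional ℝ V] (S : Set V) (hS : IsLPL S) :
    IsLPL (closure S) ∧ IsLPL (interior S) ∧ IsLPL Sᶜ :=
  ⟨hS.closure, hS.interior, hS.compl⟩
end

section
/- If S₁ and S₂ are LPL subsets of V, then S₁ ∪ S₂ and S₁ ∩ S₂ are LPL; moreover every connected component of an LPL subset of V is LPL. -/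
open Set

lemma IsHalfspace.convex {V : Type*} [AddCommGroup V] [Module ℝ V] [TopologicalSpace V]
    {H : Set V} (h : IsHalfspace H) : Convex ℝ H := by
  obtain ⟨f, c, h | h⟩ := h
  · rw [h]; exact convex_halfSpace_lt f.isLinear c
  · rw [h]; exact convex_halfSpace_le f.isLinear c

lemma IsConvexPolyhedron.convex {V : Type*} [AddCommGroup V] [Module ℝ V] [TopologicalSpace V]
    {P : Set V} (h : IsConvexPolyhedron P) : Convex ℝ P := by
  obtain ⟨n, H, hH, rfl⟩ := h
  exact convex_iInter fun i => (hH i).convex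

lemma iInter_fin_append {α : Type*} {n m : ℕ} (a : Fin n → Set α) (b : Fin m → Set α) :
    ⋂ i, Fin.append a b i = (⋂ i, a i) ∩ (⋂ i, b i) := by
  ext x
  simp only [mem_iInter, mem_inter_iff]
  constructor
  · intro h
    exact ⟨fun i => by simpa [Fin.append_left] using h (Fin.castAdd m i),
           fun i => by simpa [Fin.append_right] using h (Fin.natAdd n i)⟩
  · rintro ⟨h1, h2⟩ i
    refine Fin.addCases (fun i => ?_) (fun i => ?_) i
    · rw [Fin.append_left]; exact h1 i
    · rw [Fin.append_right]; exact h2 i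

lemma IsConvexPolyhedron.inter {V : Type*} [AddCommGroup V] [Module ℝ V]
    {P Q : Set V} (hP : IsConvexPolyhedron P) (hQ : IsConvexPolyhedron Q) :
    IsConvexPolyhedron (P ∩ Q) := by
  obtain ⟨n, H₁, hH₁, rfl⟩ := hP
  obtain ⟨m, H₂, hH₂, rfl⟩ := hQ
  refine ⟨n + m, Fin.append H₁ H₂, fun i => ?_, (iInter_fin_append H₁ H₂).symm⟩
  refine Fin.addCases (fun i => ?_) (fun i => ?_) i
  · rw [Fin.append_left]; exact hH₁ i
  · rw [Fin.append_right]; exact hH₂ i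

lemma locallyFinite_subtype_iff {V : Type*} [TopologicalSpace V] (Ps : Set (Set V)) :
    LocallyFinite (fun P : Ps => (P : Set V)) ↔
      ∀ x : V, ∃ U ∈ nhds x, {P ∈ Ps | (P ∩ U).Nonempty}.Finite := by
  constructor
  · intro h x
    obtain ⟨U, hU, hfin⟩ := h x
    refine ⟨U, hU, ?_⟩
    have : {P ∈ Ps | (P ∩ U).Nonempty} =
        Subtype.val '' {i : Ps | ((i : Set V) ∩ U).Nonempty} := by
      ext P
      simp only [mem_image, mem_setOf_eq, mem_sep_iff]
      constructor
      · rintro ⟨hP, hne⟩; exact ⟨⟨P, hP⟩, hne, rfl⟩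
      · rintro ⟨⟨Q, hQ⟩, hne, rfl⟩; exact ⟨hQ, hne⟩
    rw [this]
    exact hfin.image _
  · intro h x
    obtain ⟨U, hU, hfin⟩ := h x
    refine ⟨U, hU, ?_⟩
    have : {i : Ps | ((i : Set V) ∩ U).Nonempty} =
        Subtype.val ⁻¹' {P ∈ Ps | (P ∩ U).Nonempty} := by
      ext ⟨P, hP⟩
      simp [hP]
    rw [this]
    exact hfin.preimage Subtype.val_injective.injOn

theorem LPL_union_inter_connectedComponent {V : Type*} [NormedAddCommGroup V]
    [NormedSpace ℝ V] [FiniteDimensional ℝ V] :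
    (∀ S₁ S₂ : Set V, IsLPL S₁ → IsLPL S₂ → IsLPL (S₁ ∪ S₂) ∧ IsLPL (S₁ ∩ S₂)) ∧
    (∀ S : Set V, IsLPL S → ∀ x ∈ S, IsLPL (connectedComponentIn S x)) := by
  constructor
  · rintro S₁ S₂ ⟨Ps₁, hpoly₁, hlf₁, rfl⟩ ⟨Ps₂, hpoly₂, hlf₂, rfl⟩
    rw [locallyFinite_subtype_iff] at hlf₁ hlf₂
    constructor
    · -- union
      refine ⟨Ps₁ ∪ Ps₂, ?_, ?_, ?_⟩
      · rintro P (hP | hP)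
        exacts [hpoly₁ P hP, hpoly₂ P hP]
      · rw [locallyFinite_subtype_iff]
        intro x
        obtain ⟨U₁, hU₁, hf₁⟩ := hlf₁ x
        obtain ⟨U₂, hU₂, hf₂⟩ := hlf₂ x
        refine ⟨U₁ ∩ U₂, Filter.inter_mem hU₁ hU₂, (hf₁.union hf₂).subset ?_⟩
        rintro P ⟨hP | hP, hne⟩
        · exact Or.inl ⟨hP, hne.mono (inter_subset_inter_right _ inter_subset_left)⟩
        · exact Or.inr ⟨hP, hne.mono (inter_subset_inter_right _ inter_subset_right)⟩
      · rw [sUnion_union]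
    · -- intersection
      refine ⟨(fun pq : Set V × Set V => pq.1 ∩ pq.2) '' (Ps₁ ×ˢ Ps₂), ?_, ?_, ?_⟩
      · rintro R ⟨⟨P, Q⟩, ⟨hP, hQ⟩, rfl⟩
        exact (hpoly₁ P hP).inter (hpoly₂ Q hQ)
      · rw [locallyFinite_subtype_iff]
        intro x
        obtain ⟨U₁, hU₁, hf₁⟩ := hlf₁ x
        obtain ⟨U₂, hU₂, hf₂⟩ := hlf₂ x
        refine ⟨U₁ ∩ U₂, Filter.inter_mem hU₁ hU₂,
          (((hf₁.prod hf₂).image (fun pq : Set V × Set V => pq.1 ∩ pq.2)).subset ?_)⟩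
        rintro R ⟨⟨⟨P, Q⟩, ⟨hP, hQ⟩, rfl⟩, hne⟩
        refine ⟨⟨P, Q⟩, ⟨⟨hP, ?_⟩, hQ, ?_⟩, rfl⟩
        · exact hne.mono fun y hy => ⟨hy.1.1, hy.2.1⟩
        · exact hne.mono fun y hy => ⟨hy.1.2, hy.2.2⟩
      · ext y
        simp only [mem_inter_iff, mem_sUnion, mem_image, mem_prod, Prod.exists]
        constructor
        · rintro ⟨⟨P, hP, hyP⟩, ⟨Q, hQ, hyQ⟩⟩
          exact ⟨P ∩ Q, ⟨P, Q, ⟨hP, hQ⟩, rfl⟩, hyP, hyQ⟩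
        · rintro ⟨R, ⟨P, Q, ⟨hP, hQ⟩, rfl⟩, hyP, hyQ⟩
          exact ⟨⟨P, hP, hyP⟩, ⟨Q, hQ, hyQ⟩⟩
  · rintro S ⟨Ps, hpoly, hlf, rfl⟩ x hx
    refine ⟨{P ∈ Ps | (P ∩ connectedComponentIn (⋃₀ Ps) x).Nonempty},
      fun P hP => hpoly P hP.1, ?_, ?_⟩
    · rw [locallyFinite_subtype_iff] at hlf ⊢
      intro y
      obtain ⟨U, hU, hfin⟩ := hlf y
      exact ⟨U, hU, hfin.subset fun P hP => ⟨hP.1.1, hP.2⟩⟩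
    · apply Subset.antisymm
      · intro y hy
        have hyS : y ∈ ⋃₀ Ps := connectedComponentIn_subset _ _ hy
        obtain ⟨P, hP, hyP⟩ := hyS
        exact ⟨P, ⟨hP, y, hyP, hy⟩, hyP⟩
      · rintro y ⟨P, ⟨hP, z, hzP, hzC⟩, hyP⟩
        have hPS : P ⊆ ⋃₀ Ps := fun w hw => ⟨P, hP, hw⟩
        have hPC : P ⊆ connectedComponentIn (⋃₀ Ps) z :=
          ((hpoly P hP).convex.isPreconnected).subset_connectedComponentIn hzP hPS
        rw [← connectedComponentIn_eq hzC] at hPC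
        exact hPC hyP
end
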